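/- Let a, b : ℕ → Bool be bit sequences. For i ≤ j define the propagate bit p_{j,i} = ⋀_{l=i}^{j} (a_l ⊕ b_l) and the generate bit g_{j,i} = decide((∑_{l=i}^{j} a_l.toNat · 2^{l-i}) + (∑_{l=i}^{j} b_l.toNat · 2^{l-i}) ≥ 2^{j-i+1}). For any Boolean carry-in c, define the block carry-out carryOut(i, j, c) by the full-adder carry recurrence over positions i, i+1, …, j: starting from carry-in c at position i, at each position l the new carry is (a_l ∧ b_l) ∨ (a_l ∧ carry) ∨ (b_l ∧ carry). Then for all i ≤ j and all c : Bool, carryOut(i, j, c) = g_{j,i} ∨ (p_{j,i} ∧ c). -/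

import Mathlib

/-! Read the blocks of `a` and `b` as numbers `A, B < 2 ^ (t + 1)`. Step by step, the ripple
carry of a block with carry-in `c` is the overflow bit of `A + B + c`. As `c ≤ 1`, this overflows
iff `A + B` already does (generate) or `A + B = 2 ^ (t + 1) - 1` and `c` is set; and
`A + B = 2 ^ (t + 1) - 1` holds exactly when the two blocks are bitwise complementary
(propagate). -/

/-- The propagate bit `p_{j,i} = ⋀_{l=i}^{j} (a_l ⊕ b_l)` of the block of bit
positions `i` through `j`. -/
def propagate (a b : ℕ → Bool) (i j : ℕ) : Bool :=
  decide (∀ l ∈ Finset.Icc i j, xor (a l) (b l) = true)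

/-- The generate bit
`g_{j,i} = decide((∑_{l=i}^{j} a_l·2^{l-i}) + (∑_{l=i}^{j} b_l·2^{l-i}) ≥ 2^{j-i+1})`
of the block of bit positions `i` through `j`. -/
def generate (a b : ℕ → Bool) (i j : ℕ) : Bool :=
  decide (2 ^ (j - i + 1) ≤
    (∑ l ∈ Finset.Icc i j, (a l).toNat * 2 ^ (l - i)) +
      (∑ l ∈ Finset.Icc i j, (b l).toNat * 2 ^ (l - i)))

/-- `carryOut a b i j c` is the carry out of the block of bit positions
`i, i+1, …, j` when the carry into position `i` is `c`, computed by the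
full-adder carry recurrence: at each position `l` the new carry is
`(a_l ∧ b_l) ∨ (a_l ∧ carry) ∨ (b_l ∧ carry)`. (Here `j = i + t` where
`t` is the recursion depth.) -/
def carryOut (a b : ℕ → Bool) (i : ℕ) (c : Bool) : ℕ → Bool
  | 0 => (a i && b i) || (a i && c) || (b i && c)
  | t + 1 =>
      (a (i + t + 1) && b (i + t + 1)) ||
        (a (i + t + 1) && carryOut a b i c t) || (b (i + t + 1) && carryOut a b i c t)

open Finset

def bitsVal (x : ℕ → Bool) (n : ℕ) : ℕ :=
  ∑ k ∈ range n, (x k).toNat * 2 ^ k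

theorem bitsVal_succ (x : ℕ → Bool) (n : ℕ) :
    bitsVal x (n + 1) = bitsVal x n + (x n).toNat * 2 ^ n :=
  sum_range_succ _ _

theorem bitsVal_lt_two_pow (x : ℕ → Bool) (n : ℕ) : bitsVal x n < 2 ^ n := by
  induction n with
  | zero => simp [bitsVal]
  | succ n ih =>
    have hbit : (x n).toNat ≤ 1 := Bool.toNat_le _
    rw [bitsVal_succ, pow_succ]
    nlinarith

theorem bitsVal_add_eq_two_pow_sub_one_iff (x y : ℕ → Bool) (n : ℕ) :
    bitsVal x n + bitsVal y n = 2 ^ n - 1 ↔ ∀ k < n, xor (x k) (y k) = true := by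
  induction n with
  | zero => simp [bitsVal]
  | succ n ih =>
    have hx := bitsVal_lt_two_pow x n
    have hy := bitsVal_lt_two_pow y n
    rw [bitsVal_succ, bitsVal_succ, pow_succ, Nat.forall_lt_succ_right, ← ih]
    cases x n <;> cases y n <;> simp <;> omega

/-- Full-adder step: if `s < 2 ^ (n + 1)` is the value of the low `n` bits of two addends plus a
carry-in, the carry out of position `n` is the majority of the addend bits there and of the carry
`2 ^ n ≤ s` into it. -/
theorem decide_two_pow_succ_le_add_eq_majority (α β : Bool) {n s : ℕ} (hs : s < 2 ^ (n + 1)) :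
    decide (2 ^ (n + 1) ≤ s + (α.toNat + β.toNat) * 2 ^ n) =
      (α && β || α && decide (2 ^ n ≤ s) || β && decide (2 ^ n ≤ s)) := by
  rw [pow_succ] at *
  cases α <;> cases β <;> simp <;> omega

theorem decide_le_add_toNat {N s : ℕ} (hN : 0 < N) (c : Bool) :
    decide (N ≤ s + c.toNat) = (decide (N ≤ s) || decide (s = N - 1) && c) := by
  rw [Bool.eq_iff_iff]
  cases c
  · simp
  · simp; omega

theorem carryOut_eq_decide (a b : ℕ → Bool) (i : ℕ) (c : Bool) (t : ℕ) :
    carryOut a b i c t = decide (2 ^ (t + 1) ≤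
      bitsVal (fun k => a (i + k)) (t + 1) + bitsVal (fun k => b (i + k)) (t + 1) + c.toNat) := by
  induction t with
  | zero =>
    simp only [carryOut, zero_add, pow_one, bitsVal, range_one, sum_singleton, add_zero, pow_zero,
      mul_one]
    cases a i <;> cases b i <;> cases c <;> rfl
  | succ t ih =>
    have ha := bitsVal_lt_two_pow (fun k => a (i + k)) (t + 1)
    have hb := bitsVal_lt_two_pow (fun k => b (i + k)) (t + 1)
    have hc := c.toNat_le
    rw [carryOut, ih, ← decide_two_pow_succ_le_add_eq_majority _ _ (by rw [pow_succ]; omega),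
      bitsVal_succ _ (t + 1), bitsVal_succ _ (t + 1)]
    congr 2
    simp only [← add_assoc]
    ring

theorem sum_Icc_toNat_mul_two_pow (x : ℕ → Bool) (i t : ℕ) :
    ∑ l ∈ Icc i (i + t), (x l).toNat * 2 ^ (l - i) = bitsVal (fun k => x (i + k)) (t + 1) := by
  rw [← Ico_add_one_right_eq_Icc, sum_Ico_eq_sum_range, add_assoc, Nat.add_sub_cancel_left]
  simp [bitsVal]

theorem generate_eq (a b : ℕ → Bool) (i t : ℕ) :
    generate a b i (i + t) = decide (2 ^ (t + 1) ≤
      bitsVal (fun k => a (i + k)) (t + 1) + bitsVal (fun k => b (i + k)) (t + 1)) := by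
  simp only [generate, sum_Icc_toNat_mul_two_pow, Nat.add_sub_cancel_left]

theorem propagate_eq (a b : ℕ → Bool) (i t : ℕ) :
    propagate a b i (i + t) = decide
      (bitsVal (fun k => a (i + k)) (t + 1) + bitsVal (fun k => b (i + k)) (t + 1) =
        2 ^ (t + 1) - 1) := by
  simp only [propagate, bitsVal_add_eq_two_pow_sub_one_iff, decide_eq_decide]
  constructor
  · intro h k hk
    exact h (i + k) (mem_Icc.2 ⟨by omega, by omega⟩)
  · intro h l hl
    obtain ⟨k, rfl⟩ := Nat.exists_eq_add_of_le (mem_Icc.1 hl).1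
    exact h k (by have := (mem_Icc.1 hl).2; omega)

/-- **Block carry via generate/propagate.** For all `i ≤ j` and every carry-in
`c`, the carry out of the block of positions `i` through `j` equals
`g_{j,i} ∨ (p_{j,i} ∧ c)`. -/
theorem carryOut_eq_generate_or_propagate (a b : ℕ → Bool) (i j : ℕ) (hij : i ≤ j)
    (c : Bool) :
    carryOut a b i c (j - i) = (generate a b i j || (propagate a b i j && c)) := by
  obtain ⟨t, rfl⟩ := Nat.exists_eq_add_of_le hij
  rw [Nat.add_sub_cancel_left, carryOut_eq_decide, generate_eq, propagate_eq]
  exact decide_le_add_toNat (Nat.two_pow_pos _) c
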